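/- arXiv:0812.2811 — 2 statements merged into one kernel-verified Lean document; each statement's English description precedes it below -/
import Mathlib

section
/- Let S, T : [−1,1] → ℝ be differentiable, U : [−1,1] → ℝ differentiable, λ₂, λ₃ ∈ ℝ, and suppose S = −(λ₃ + λ₂T)e^{2U} and T'' − 2U'T' + λ₂(λ₃ + λ₂T)e^{4U} = 0 hold on (−1,1). Then the function γ(x) := −[S(x)² + T'(x)²]e^{-4U(x)} is constant. -/
open Real Set

/-!
Multiplying the equation for `T''` by `2 T' e^{-4U}` shows that `(λ₃ + λ₂ T)² + T'² e^{-4U}` is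
a first integral, and on `(-1, 1)` the relation between `S` and `T` identifies `γ` with minus
this first integral. Continuity of `γ` on `[-1, 1]` carries the constancy to the endpoints.
-/

theorem Convex.is_const_of_hasDerivAt_eq_zero {D : Set ℝ} (hD : Convex ℝ D) {f : ℝ → ℝ}
    (hf : ContinuousOn f D) (hf' : ∀ x ∈ interior D, HasDerivAt f 0 x) {x y : ℝ}
    (hx : x ∈ D) (hy : y ∈ D) : f x = f y := by
  have hf'' : ∀ x ∈ interior D, HasDerivWithinAt f 0 (interior D) x :=
    fun x hx => (hf' x hx).hasDerivWithinAt
  have hmono := monotoneOn_of_hasDerivWithinAt_nonneg hD hf hf'' fun _ _ => le_rfl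
  have hanti := antitoneOn_of_hasDerivWithinAt_nonpos hD hf hf'' fun _ _ => le_rfl
  rcases le_total x y with hxy | hxy
  · exact le_antisymm (hmono hx hy hxy) (hanti hx hy hxy)
  · exact le_antisymm (hanti hy hx hxy) (hmono hy hx hxy)

noncomputable def firstIntegral (lam₂ lam₃ : ℝ) (T T' U : ℝ → ℝ) (x : ℝ) : ℝ :=
  (lam₃ + lam₂ * T x) ^ 2 + T' x ^ 2 * exp (-4 * U x)

theorem hasDerivAt_firstIntegral {T T' U : ℝ → ℝ} {t'' u' lam₂ lam₃ x : ℝ}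
    (hT : HasDerivAt T (T' x) x) (hT' : HasDerivAt T' t'' x) (hU : HasDerivAt U u' x)
    (hODE : t'' - 2 * u' * T' x + lam₂ * (lam₃ + lam₂ * T x) * exp (4 * U x) = 0) :
    HasDerivAt (firstIntegral lam₂ lam₃ T T' U) 0 x := by
  have hderiv := (((hT.const_mul lam₂).const_add lam₃).pow 2).add
    ((hT'.pow 2).mul ((hU.const_mul (-4)).exp))
  have hexp : exp (4 * U x) * exp (-4 * U x) = 1 := by rw [← exp_add]; norm_num
  refine hderiv.congr_deriv ?_
  simp only [Nat.cast_ofNat, pow_one, Nat.add_one_sub_one, Pi.pow_apply]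
  linear_combination (2 * T' x * exp (-4 * U x)) * hODE
    - (2 * lam₂ * (lam₃ + lam₂ * T x) * T' x) * hexp

theorem sq_mul_exp_neg_four_mul_eq {s p u : ℝ} (hs : s = -p * exp (2 * u)) :
    s ^ 2 * exp (-4 * u) = p ^ 2 := by
  have hexp : exp (2 * u) ^ 2 * exp (-4 * u) = 1 := by
    rw [← exp_nat_mul, ← exp_add]; ring_nf; exact exp_zero
  rw [hs]
  linear_combination p ^ 2 * hexp

/-- If S = −(λ₃ + λ₂T)e^{2U} and T'' − 2U'T' + λ₂(λ₃ + λ₂T)e^{4U} = 0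
hold on (−1,1), then γ(x) := −[S(x)² + T'(x)²]e^{−4U(x)} is constant on [−1,1]. -/
theorem stmt_10 (S T T' T'' U U' : ℝ → ℝ) (lam₂ lam₃ : ℝ)
    (hT : ∀ x ∈ Icc (-1:ℝ) 1, HasDerivAt T (T' x) x)
    (hT' : ∀ x ∈ Icc (-1:ℝ) 1, HasDerivAt T' (T'' x) x)
    (hU : ∀ x ∈ Icc (-1:ℝ) 1, HasDerivAt U (U' x) x)
    (hScont : ContinuousOn S (Icc (-1:ℝ) 1))
    (hSdef : ∀ x ∈ Ioo (-1:ℝ) 1, S x = -(lam₃ + lam₂ * T x) * Real.exp (2 * U x))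
    (hODE : ∀ x ∈ Ioo (-1:ℝ) 1,
      T'' x - 2 * U' x * T' x + lam₂ * (lam₃ + lam₂ * T x) * Real.exp (4 * U x) = 0) :
    ∃ c : ℝ, ∀ x ∈ Icc (-1:ℝ) 1,
      -((S x)^2 + (T' x)^2) * Real.exp (-4 * U x) = c := by
  set γ : ℝ → ℝ := fun x => -((S x) ^ 2 + (T' x) ^ 2) * exp (-4 * U x)
  have hT'cont : ContinuousOn T' (Icc (-1) 1) :=
    fun x hx => (hT' x hx).continuousAt.continuousWithinAt
  have hUcont : ContinuousOn U (Icc (-1) 1) :=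
    fun x hx => (hU x hx).continuousAt.continuousWithinAt
  have hγcont : ContinuousOn γ (Icc (-1) 1) := by fun_prop
  have hγderiv : ∀ x ∈ interior (Icc (-1 : ℝ) 1), HasDerivAt γ 0 x := by
    rw [interior_Icc]
    intro x hx
    have hγ : γ =ᶠ[nhds x] -firstIntegral lam₂ lam₃ T T' U := by
      filter_upwards [Ioo_mem_nhds hx.1 hx.2] with y hy
      change -(S y ^ 2 + T' y ^ 2) * exp (-4 * U y) = -firstIntegral lam₂ lam₃ T T' U y
      rw [firstIntegral, ← sq_mul_exp_neg_four_mul_eq (hSdef y hy)]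
      ring
    have hx' := Ioo_subset_Icc_self hx
    simpa using ((hasDerivAt_firstIntegral (hT x hx') (hT' x hx') (hU x hx')
      (hODE x hx)).neg).congr_of_eventuallyEq hγ
  exact ⟨γ (-1), fun x hx => (convex_Icc _ _).is_const_of_hasDerivAt_eq_zero hγcont hγderiv hx
    (left_mem_Icc.2 (by norm_num))⟩
end

section
/- Let ε > 0, F < 0, γ < 0, λ₁ = 0, and suppose W(x) = 2F/(γ − (−γ)cosh y(x)) with y(x) = (2√(−F)/√(1+ε))artanh(x/√(1+ε)) satisfies W(±1) = ε, so that γ = 2F/(ε(1 + cosh y₁)) where y₁ := y(1). Then ∫_{-1}^1 W(x)/(1+ε−x²) dx = ε sinh(y₁)/√(−F). -/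
open Real Set MeasureTheory intervalIntegral

/-- The inverse hyperbolic tangent. -/
noncomputable def artanh' (x : ℝ) : ℝ := (1/2) * Real.log ((1 + x) / (1 - x))

/-!
The boundary condition turns `W` into `ε (1 + cosh y₁) / (1 + cosh y)`, and
`y' = 2 √(-F) / (1 + ε - x²)`. As `(tanh (y / 2))' = y' / (1 + cosh y)`, the integrand is a constant
multiple of a derivative, so the integral is `ε (1 + cosh y₁) tanh (y₁ / 2) / √(-F)`, and
`(1 + cosh t) tanh (t / 2) = sinh t`.
-/

lemma artanh'_neg (x : ℝ) : artanh' (-x) = -artanh' x := by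
  rw [artanh', artanh', ← sub_eq_add_neg, sub_neg_eq_add, ← inv_div (1 + x), Real.log_inv,
    mul_neg]

lemma hasDerivAt_artanh' {x : ℝ} (hx : |x| < 1) : HasDerivAt artanh' (1 - x ^ 2)⁻¹ x := by
  obtain ⟨hx₁, hx₂⟩ := abs_lt.1 hx
  have hp : 0 < 1 + x := by linarith
  have hm : 0 < 1 - x := by linarith
  have hquot := ((hasDerivAt_id' x).const_add 1).fun_div ((hasDerivAt_id' x).const_sub 1) hm.ne'
  refine ((hquot.log (div_pos hp hm).ne').const_mul (1 / 2 : ℝ)).congr_deriv ?_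
  rw [show (1 : ℝ) - x ^ 2 = (1 + x) * (1 - x) by ring]
  field_simp
  ring

lemma hasDerivAt_artanh'_div {s x : ℝ} (hs : 0 < s) (hx : |x| < s) :
    HasDerivAt (fun t => artanh' (t / s)) (s / (s ^ 2 - x ^ 2)) x := by
  have hxs : |x / s| < 1 := by rwa [abs_div, abs_of_pos hs, div_lt_one hs]
  have hden : s ^ 2 - x ^ 2 ≠ 0 := by nlinarith [sq_abs x, abs_nonneg x]
  refine ((hasDerivAt_artanh' hxs).comp x ((hasDerivAt_id' x).div_const s)).congr_deriv ?_
  rw [div_pow]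
  field_simp

lemma one_add_cosh_eq (t : ℝ) : 1 + cosh t = 2 * cosh (t / 2) ^ 2 := by
  have h := cosh_two_mul (t / 2)
  rw [mul_div_cancel₀ t two_ne_zero] at h
  rw [h, sinh_sq]
  ring

lemma one_add_cosh_mul_tanh_half (t : ℝ) : (1 + cosh t) * tanh (t / 2) = sinh t := by
  have h := sinh_two_mul (t / 2)
  rw [mul_div_cancel₀ t two_ne_zero] at h
  rw [one_add_cosh_eq, tanh_eq_sinh_div_cosh, h]
  field_simp [(cosh_pos (t / 2)).ne']

lemma HasDerivAt.tanh_half {f : ℝ → ℝ} {f' x : ℝ} (hf : HasDerivAt f f' x) :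
    HasDerivAt (fun t => tanh (f t / 2)) (f' / (1 + Real.cosh (f x))) x := by
  have hc := (cosh_pos (f x / 2)).ne'
  have hu := hf.div_const 2
  refine ((hu.sinh.fun_div hu.cosh hc).congr_deriv ?_).congr_of_eventuallyEq
    (Filter.Eventually.of_forall fun t => tanh_eq_sinh_div_cosh _)
  rw [one_add_cosh_eq]
  field_simp
  rw [cosh_sq_sub_sinh_sq, mul_one]

theorem integral_deriv_div_one_add_cosh {f f' : ℝ → ℝ} {a b : ℝ}
    (hf : ∀ x ∈ uIcc a b, HasDerivAt f (f' x) x) (hf' : ContinuousOn f' (uIcc a b)) :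
    ∫ x in a..b, f' x / (1 + cosh (f x)) = tanh (f b / 2) - tanh (f a / 2) := by
  have hpos : ∀ t, 1 + cosh t ≠ 0 := fun t => by linarith [one_le_cosh t]
  have hfc : ContinuousOn f (uIcc a b) := fun x hx => (hf x hx).continuousAt.continuousWithinAt
  refine integral_eq_sub_of_hasDerivAt (fun x hx => (hf x hx).tanh_half) ?_
  exact (hf'.div (continuous_const.add continuous_cosh |>.comp_continuousOn hfc)
    fun x _ => hpos _).intervalIntegrable

theorem stmt_12_general (ε F γ : ℝ) (hε : 0 < ε) (hF : F < 0)
    (y W : ℝ → ℝ) (y₁ : ℝ)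
    (hy : y = fun x => (2 * Real.sqrt (-F) / Real.sqrt (1 + ε)) *
      artanh' (x / Real.sqrt (1 + ε)))
    (hy₁ : y₁ = y 1)
    (hW : W = fun x => 2 * F / (γ - (-γ) * Real.cosh (y x)))
    (hγ : γ = 2 * F / (ε * (1 + Real.cosh y₁))) :
    (∫ x in (-1:ℝ)..1, W x / (1 + ε - x^2)) = ε * Real.sinh y₁ / Real.sqrt (-F) := by
  set r := √(-F)
  set s := √(1 + ε)
  have hr : 0 < r := sqrt_pos.2 (neg_pos.2 hF)
  have hs : s ^ 2 = 1 + ε := sq_sqrt (by linarith)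
  have hs1 : 1 < s := by nlinarith [sqrt_nonneg (1 + ε)]
  have hden : ∀ x ∈ uIcc (-1 : ℝ) 1, 0 < 1 + ε - x ^ 2 := fun x hx => by
    rw [uIcc_of_le (by norm_num)] at hx
    nlinarith [hx.1, hx.2]
  have hW_eq : ∀ x, W x = ε * (1 + cosh y₁) / (1 + cosh (y x)) := fun x => by
    have : 0 < 1 + cosh (y x) := by positivity
    have : 0 < 1 + cosh y₁ := by positivity
    rw [hW]
    dsimp only
    rw [show γ - -γ * cosh (y x) = γ * (1 + cosh (y x)) by ring, hγ]
    field_simp [hF.ne]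
  have hy_deriv : ∀ x ∈ uIcc (-1 : ℝ) 1, HasDerivAt y (2 * r / (1 + ε - x ^ 2)) x := fun x hx => by
    have hxs : |x| < s := by
      rw [uIcc_of_le (by norm_num)] at hx
      exact (abs_le.2 hx).trans_lt hs1
    rw [hy]
    refine ((hasDerivAt_artanh'_div (by linarith) hxs).const_mul _).congr_deriv ?_
    rw [hs]
    field_simp [(hden x hx).ne']
  have hy_neg : y (-1) = -y₁ := by
    rw [hy₁, hy]
    simp only [neg_div, artanh'_neg, mul_neg]
  set K := ε * (1 + cosh y₁) / (2 * r) with hK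
  calc ∫ x in (-1 : ℝ)..1, W x / (1 + ε - x ^ 2)
      = ∫ x in (-1 : ℝ)..1, K * (2 * r / (1 + ε - x ^ 2) / (1 + cosh (y x))) :=
        integral_congr fun x _ => by rw [hW_eq, hK]; field_simp
    _ = K * (tanh (y 1 / 2) - tanh (y (-1) / 2)) := by
        rw [intervalIntegral.integral_const_mul, integral_deriv_div_one_add_cosh hy_deriv]
        exact continuousOn_const.div (by fun_prop) fun x hx => (hden x hx).ne'
    _ = ε * sinh y₁ / r := by
        rw [hy_neg, ← hy₁, neg_div, tanh_neg, ← one_add_cosh_mul_tanh_half, hK]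
        field_simp
        ring

/-- In the case λ₁ = 0, with W(x) = 2F/(γ − (−γ)cosh y(x)) and
W(±1) = ε, i.e. γ = 2F/(ε(1 + cosh y₁)), one has
∫_{-1}^1 W(x)/(1+ε−x²) dx = ε sinh(y₁)/√(−F). -/
theorem stmt_12 (ε F γ lam₁ : ℝ) (hε : 0 < ε) (hF : F < 0) (hγneg : γ < 0)
    (hlam₁ : lam₁ = 0)
    (y W : ℝ → ℝ) (y₁ : ℝ)
    (hy : y = fun x => (2 * Real.sqrt (-F) / Real.sqrt (1 + ε)) *
      artanh' (x / Real.sqrt (1 + ε)))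
    (hy₁ : y₁ = y 1)
    (hW : W = fun x => 2 * F / (γ - (-γ) * Real.cosh (y x)))
    (hWbdry : W 1 = ε ∧ W (-1) = ε)
    (hγ : γ = 2 * F / (ε * (1 + Real.cosh y₁))) :
    (∫ x in (-1:ℝ)..1, W x / (1 + ε - x^2)) = ε * Real.sinh y₁ / Real.sqrt (-F) :=
  stmt_12_general ε F γ hε hF y W y₁ hy hy₁ hW hγ
end
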